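/- arXiv:1312.7757 — 3 statements merged into one kernel-verified Lean document; each statement's English description precedes it below -/
import Mathlib

section
/- Let G be a Roelcke precompact Polish group. For every p ∈ Ĝ_{L∧R} and all x, y ∈ Ĝ_L such that px = py, there exist w, u, v ∈ Ĝ_L such that w*u = w*v = p and uy = vx. -/
open Filter Topology Set Pointwise

/-- A topological group is Roelcke precompact if for every neighbourhood `U` of the identity
there is a finite set `F` with `U * F * U = G`. -/
def RoelckePrecompact (G : Type*) [Group G] [TopologicalSpace G] : Prop :=
  ∀ U ∈ 𝓝 (1 : G), ∃ F : Set G, F.Finite ∧ U * F * U = Set.univ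

/-- Abstract axiomatization of the left completion `Ĝ_L` of a topological group `G`:
the completion of `G` with respect to a compatible left-invariant metric, together with
the continuous semigroup law extending the multiplication of `G`. -/
structure LeftCompletion (G : Type*) [Group G] [TopologicalSpace G] where
  L : Type*
  [metL : MetricSpace L]
  completeL : CompleteSpace L
  e : G → L
  dense_e : DenseRange e
  embed_e : Topology.IsEmbedding e
  dist_left_invariant : ∀ k g h : G, dist (e (k * g)) (e (k * h)) = dist (e g) (e h)
  lmul : L → L → L
  cont_lmul : Continuous fun p : L × L => lmul p.1 p.2
  lmul_e : ∀ g h : G, lmul (e g) (e h) = e (g * h)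
  lmul_assoc : ∀ x y z, lmul (lmul x y) z = lmul x (lmul y z)

attribute [instance] LeftCompletion.metL

/-- Abstract axiomatization of the Roelcke completion `Ĝ_{L∧R} = Ĝ_L² ⫽ G` of a topological
group, together with the pairing `(x, y) ↦ x*y = [x,y]` (so that every element of `Ĝ_{L∧R}`
is of the form `x*y`) and the continuous operation `Ĝ_{L∧R} × Ĝ_L → Ĝ_{L∧R}` given by
`(x*y)·z = x*(yz)`. -/
structure RoelckeCompletion (G : Type*) [Group G] [TopologicalSpace G]
    extends LeftCompletion G where
  M : Type*
  [metM : MetricSpace M]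
  completeM : CompleteSpace M
  pair : L → L → M
  pair_surj : ∀ p : M, ∃ x y : L, pair x y = p
  dist_pair : ∀ x y x' y' : L,
    dist (pair x y) (pair x' y') =
      ⨅ gh : G × G,
        max (dist (lmul (e gh.1) x) (lmul (e gh.2) x'))
            (dist (lmul (e gh.1) y) (lmul (e gh.2) y'))
  act : M → L → M
  cont_act : Continuous fun p : M × L => act p.1 p.2
  act_pair : ∀ x y z : L, act (pair x y) z = pair x (lmul y z)

attribute [instance] RoelckeCompletion.metM

/-!
Write `p = a*b`. The equality `a*(bx) = a*(by)` yields `gₙ ∈ G` with `gₙa → a` and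
`gₙ(by) → bx`. Roelcke precompactness makes `Ĝ_{L∧R}` compact (it is the closure of the totally
bounded set of the `1*g`), so along a subsequence `1*gₙ → c*d`. Computing the limit of
`(1*gₙ)·z = 1*(gₙz)` in two ways gives `c*(dz) = 1*lim gₙz`, and `c*Z = 1*Z'` forces `Z = cZ'`.
Hence `da = ca` and `dby = cbx`, so `w = ca`, `u = db`, `v = cb` will do.
-/

namespace LeftCompletion

variable {G : Type*} [Group G] [TopologicalSpace G] (R : LeftCompletion G)

@[fun_prop]
lemma continuous_lmul {X : Type*} [TopologicalSpace X] {f g : X → R.L}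
    (hf : Continuous f) (hg : Continuous g) : Continuous fun x => R.lmul (f x) (g x) :=
  R.cont_lmul.comp (hf.prodMk hg)

lemma e_one_lmul (z : R.L) : R.lmul (R.e 1) z = z :=
  congrFun (R.dense_e.equalizer (by fun_prop) continuous_id
    (funext fun g => by simp [R.lmul_e])) z

lemma e_inv_lmul_e_lmul (g : G) (z : R.L) : R.lmul (R.e g⁻¹) (R.lmul (R.e g) z) = z := by
  rw [← R.lmul_assoc, R.lmul_e, inv_mul_cancel, e_one_lmul]

lemma isometry_lmul_e (g : G) : Isometry (R.lmul (R.e g)) := by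
  refine Isometry.of_dist_eq fun z z' => congrFun ((R.dense_e.prodMap R.dense_e).equalizer
    (f := Prod.map R.e R.e) (g := fun q => dist (R.lmul (R.e g) q.1) (R.lmul (R.e g) q.2))
    (by fun_prop) continuous_dist (funext fun q => ?_)) (z, z')
  simp only [Function.comp, Prod.map, R.lmul_e, R.dist_left_invariant]

end LeftCompletion

namespace RoelckeCompletion

variable {G : Type*} [Group G] [TopologicalSpace G] (R : RoelckeCompletion G)

lemma dist_pair_le (x y x' y' : R.L) (g h : G) :
    dist (R.pair x y) (R.pair x' y') ≤
      max (dist (R.lmul (R.e g) x) (R.lmul (R.e h) x'))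
          (dist (R.lmul (R.e g) y) (R.lmul (R.e h) y')) := by
  rw [R.dist_pair]
  exact ciInf_le ⟨0, by rintro r ⟨i, rfl⟩; exact le_max_of_le_left dist_nonneg⟩ (g, h)

lemma lipschitzWith_pair : LipschitzWith 1 fun q : R.L × R.L => R.pair q.1 q.2 :=
  LipschitzWith.of_dist_le_mul fun q q' => by
    simpa [Prod.dist_eq, R.e_one_lmul] using R.dist_pair_le q.1 q.2 q'.1 q'.2 1 1

@[fun_prop]
lemma continuous_pair {X : Type*} [TopologicalSpace X] {f g : X → R.L}
    (hf : Continuous f) (hg : Continuous g) : Continuous fun x => R.pair (f x) (g x) :=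
  R.lipschitzWith_pair.continuous.comp (hf.prodMk hg)

lemma pair_e_lmul (g : G) (a b : R.L) :
    R.pair (R.lmul (R.e g) a) (R.lmul (R.e g) b) = R.pair a b := by
  apply dist_le_zero.mp
  simpa [R.e_inv_lmul_e_lmul, R.e_one_lmul] using
    R.dist_pair_le (R.lmul (R.e g) a) (R.lmul (R.e g) b) a b g⁻¹ 1

lemma pair_lmul (z a b : R.L) : R.pair (R.lmul z a) (R.lmul z b) = R.pair a b :=
  congrFun (R.dense_e.equalizer (g := fun z => R.pair (R.lmul z a) (R.lmul z b))
    (by fun_prop) continuous_const (funext fun g => R.pair_e_lmul g a b)) z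

lemma exists_dist_lmul_e_lt_of_pair_eq {A B A' B' : R.L} (h : R.pair A B = R.pair A' B')
    {ε : ℝ} (hε : 0 < ε) :
    ∃ k : G, dist (R.lmul (R.e k) A') A < ε ∧ dist (R.lmul (R.e k) B') B < ε := by
  have hinf : (⨅ gh : G × G,
      max (dist (R.lmul (R.e gh.1) A) (R.lmul (R.e gh.2) A'))
          (dist (R.lmul (R.e gh.1) B) (R.lmul (R.e gh.2) B'))) < ε := by
    rwa [← R.dist_pair, h, dist_self]
  obtain ⟨⟨g, g'⟩, hgg'⟩ := exists_lt_of_ciInf_lt hinf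
  have translate : ∀ z z' : R.L, dist (R.lmul (R.e (g⁻¹ * g')) z') z =
      dist (R.lmul (R.e g) z) (R.lmul (R.e g') z') := fun z z' => by
    rw [← (R.isometry_lmul_e g).dist_eq, ← R.lmul_assoc, R.lmul_e, mul_inv_cancel_left,
      dist_comm]
  exact ⟨g⁻¹ * g', translate A A' ▸ (le_max_left _ _).trans_lt hgg',
    translate B B' ▸ (le_max_right _ _).trans_lt hgg'⟩

lemma exists_tendsto_lmul_e_of_pair_eq {A B A' B' : R.L} (h : R.pair A B = R.pair A' B') :
    ∃ k : ℕ → G, Tendsto (fun n => R.lmul (R.e (k n)) A') atTop (𝓝 A) ∧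
      Tendsto (fun n => R.lmul (R.e (k n)) B') atTop (𝓝 B) := by
  choose k hkA hkB using fun n : ℕ =>
    R.exists_dist_lmul_e_lt_of_pair_eq h (Nat.one_div_pos_of_nat (n := n) (α := ℝ))
  exact ⟨k, tendsto_iff_dist_tendsto_zero.2 <| squeeze_zero (fun _ => dist_nonneg)
      (fun n => (hkA n).le) tendsto_one_div_add_atTop_nhds_zero_nat,
    tendsto_iff_dist_tendsto_zero.2 <| squeeze_zero (fun _ => dist_nonneg)
      (fun n => (hkB n).le) tendsto_one_div_add_atTop_nhds_zero_nat⟩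

lemma eq_lmul_of_pair_eq {c Z Z' : R.L} (h : R.pair c Z = R.pair (R.e 1) Z') :
    Z = R.lmul c Z' := by
  obtain ⟨k, hk, hkZ⟩ := R.exists_tendsto_lmul_e_of_pair_eq h
  simp only [R.lmul_e, mul_one] at hk
  exact tendsto_nhds_unique hkZ
    ((R.cont_lmul.tendsto (c, Z')).comp (hk.prodMk_nhds tendsto_const_nhds))

lemma pair_lmul_eq_of_tendsto {ι : Type*} {l : Filter ι} [l.NeBot] {s : ι → R.L}
    {c d z w : R.L} (hs : Tendsto (fun i => R.pair (R.e 1) (s i)) l (𝓝 (R.pair c d)))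
    (hz : Tendsto (fun i => R.lmul (s i) z) l (𝓝 w)) :
    R.pair c (R.lmul d z) = R.pair (R.e 1) w := by
  have hact := (R.cont_act.tendsto (R.pair c d, z)).comp (hs.prodMk_nhds tendsto_const_nhds)
  simp only [Function.comp_def, R.act_pair] at hact
  exact tendsto_nhds_unique hact
    ((R.continuous_pair continuous_fst continuous_snd).tendsto (R.e 1, w)
      |>.comp (tendsto_const_nhds.prodMk_nhds hz))

lemma dist_pair_e_one_mul_mul_le (u f u' : G) :
    dist (R.pair (R.e 1) (R.e (u * f * u'))) (R.pair (R.e 1) (R.e f)) ≤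
      max (dist (R.e 1) (R.e u)) (dist (R.e u') (R.e 1)) := by
  have hu' : dist (R.e (u * f * u')) (R.e (u * f)) = dist (R.e u') (R.e 1) := by
    simpa using R.dist_left_invariant (u * f) u' 1
  simpa [R.lmul_e, hu'] using R.dist_pair_le (R.e 1) (R.e (u * f * u')) (R.e 1) (R.e f) 1 u

lemma denseRange_pair_e_one_e : DenseRange fun g : G => R.pair (R.e 1) (R.e g) := by
  have hdense : DenseRange ((fun q : R.L × R.L => R.pair q.1 q.2) ∘ Prod.map R.e R.e) :=
    DenseRange.comp (fun m => ?_) (R.dense_e.prodMap R.dense_e) R.lipschitzWith_pair.continuous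
  · refine hdense.mono ?_
    rintro _ ⟨⟨g, h⟩, rfl⟩
    refine ⟨g⁻¹ * h, ?_⟩
    simpa [R.lmul_e] using (R.pair_e_lmul g (R.e 1) (R.e (g⁻¹ * h))).symm
  · obtain ⟨x, y, rfl⟩ := R.pair_surj m
    exact subset_closure ⟨(x, y), rfl⟩

lemma totallyBounded_range_pair_e_one_e (hG : RoelckePrecompact G) :
    TotallyBounded (range fun g : G => R.pair (R.e 1) (R.e g)) := by
  refine Metric.totallyBounded_iff.2 fun ε hε => ?_
  obtain ⟨F, hF, hUFU⟩ := hG (R.e ⁻¹' Metric.ball (R.e 1) ε)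
    (R.embed_e.continuous.continuousAt.preimage_mem_nhds (Metric.ball_mem_nhds _ hε))
  refine ⟨(fun f => R.pair (R.e 1) (R.e f)) '' F, hF.image _, ?_⟩
  rintro _ ⟨g, rfl⟩
  obtain ⟨_, ⟨u, hu, f, hf, rfl⟩, u', hu', hg⟩ : g ∈ _ * F * _ := hUFU ▸ mem_univ g
  refine mem_biUnion (mem_image_of_mem _ hf) ?_
  rw [Metric.mem_ball, ← hg]
  exact (R.dist_pair_e_one_mul_mul_le u f u').trans_lt
    (max_lt (by rwa [dist_comm]) hu')

lemma compactSpace_M (hG : RoelckePrecompact G) : CompactSpace R.M := by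
  have := R.completeM
  rw [← isCompact_univ_iff, isCompact_iff_totallyBounded_isComplete]
  refine ⟨?_, isComplete_univ⟩
  rw [← R.denseRange_pair_e_one_e.closure_range]
  exact (R.totallyBounded_range_pair_e_one_e hG).closure

end RoelckeCompletion

theorem complex_amalgamation_general {G : Type*} [Group G] [TopologicalSpace G]
    (hG : RoelckePrecompact G)
    (R : RoelckeCompletion G) (p : R.M) (x y : R.L)
    (h : R.act p x = R.act p y) :
    ∃ w u v : R.L, R.pair w u = p ∧ R.pair w v = p ∧ R.lmul u y = R.lmul v x := by
  have := R.compactSpace_M hG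
  obtain ⟨a, b, rfl⟩ := R.pair_surj p
  rw [R.act_pair, R.act_pair] at h
  obtain ⟨k, hka, hkb⟩ := R.exists_tendsto_lmul_e_of_pair_eq h
  obtain ⟨η, φ, hφ, hη⟩ := CompactSpace.tendsto_subseq fun n => R.pair (R.e 1) (R.e (k n))
  obtain ⟨c, d, rfl⟩ := R.pair_surj η
  have hda : R.lmul d a = R.lmul c a :=
    R.eq_lmul_of_pair_eq (R.pair_lmul_eq_of_tendsto hη (hka.comp hφ.tendsto_atTop))
  have hdby : R.lmul d (R.lmul b y) = R.lmul c (R.lmul b x) :=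
    R.eq_lmul_of_pair_eq (R.pair_lmul_eq_of_tendsto hη (hkb.comp hφ.tendsto_atTop))
  refine ⟨R.lmul c a, R.lmul d b, R.lmul c b, ?_, R.pair_lmul c a b, ?_⟩
  · rw [← hda, R.pair_lmul]
  · rw [R.lmul_assoc, R.lmul_assoc, hdby]

/-- **Lemma 2.6.**  Let `G` be a Roelcke precompact Polish group.  For every
`p ∈ Ĝ_{L∧R}` and all `x, y ∈ Ĝ_L` such that `px = py`, there are `w, u, v ∈ Ĝ_L` such that
`w*u = w*v = p` and `uy = vx`. -/
theorem complex_amalgamation {G : Type*} [Group G] [TopologicalSpace G] [IsTopologicalGroup G]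
    [PolishSpace G] (hG : RoelckePrecompact G)
    (R : RoelckeCompletion G) (p : R.M) (x y : R.L)
    (h : R.act p x = R.act p y) :
    ∃ w u v : R.L, R.pair w u = p ∧ R.pair w v = p ∧ R.lmul u y = R.lmul v x :=
  complex_amalgamation_general hG R p x y h
end

section
/- Let G be a Roelcke precompact Polish group. Then every idempotent e ∈ W(G) (i.e., every e with ee = e) satisfies e* = e. -/
open Filter Topology Set Pointwise

/-- Left uniform continuity of a function on a topological group. -/
def LeftUC {G : Type*} [Group G] [TopologicalSpace G] (f : G → ℂ) : Prop :=
  ∀ ε : ℝ, 0 < ε → ∃ U ∈ 𝓝 (1 : G), ∀ g h : G, g⁻¹ * h ∈ U → ‖f g - f h‖ < ε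

/-- Right uniform continuity of a function on a topological group. -/
def RightUC {G : Type*} [Group G] [TopologicalSpace G] (f : G → ℂ) : Prop :=
  ∀ ε : ℝ, 0 < ε → ∃ U ∈ 𝓝 (1 : G), ∀ g h : G, h * g⁻¹ ∈ U → ‖f g - f h‖ < ε

/-- The weak topology on a normed space: the initial topology induced by all continuous
linear functionals. -/
noncomputable def weakTopology (E : Type*) [NormedAddCommGroup E] [NormedSpace ℂ E] :
    TopologicalSpace E :=
  TopologicalSpace.induced (fun (x : E) (φ : E →L[ℂ] ℂ) => φ x) Pi.topologicalSpace

/-- A function on a topological group is weakly almost periodic if it is (bounded, continuous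
and) both left and right uniformly continuous, and its orbit under left translations is
contained in a weakly compact subset of the Banach space of bounded continuous functions. -/
def IsWAP {G : Type*} [Group G] [TopologicalSpace G] (f : G → ℂ) : Prop :=
  LeftUC f ∧ RightUC f ∧
    ∃ S : Set (BoundedContinuousFunction G ℂ),
      @IsCompact _ (weakTopology _) S ∧ ∀ g : G, ∃ F ∈ S, ∀ x : G, F x = f (g * x)

/-- "R(G) = W(G)": every bounded Roelcke uniformly continuous function (i.e. bounded function
which is both left and right uniformly continuous) is weakly almost periodic. -/
def EveryRUCIsWAP (G : Type*) [Group G] [TopologicalSpace G] : Prop :=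
  ∀ f : G → ℂ, LeftUC f → RightUC f → (∃ C : ℝ, ∀ g, ‖f g‖ ≤ C) → IsWAP f

/-- An abstract axiomatization of the WAP compactification `W(G)` of a topological group:
a compact Hausdorff semitopological ∗-semigroup into which `G` maps densely, such that the
continuous functions on it pull back exactly to the weakly almost periodic functions on `G`.
These properties determine `W(G)` uniquely up to canonical isomorphism. -/
structure WAPCompactification (G : Type*) [Group G] [TopologicalSpace G] where
  W : Type*
  [topW : TopologicalSpace W]
  compact : CompactSpace W
  t2 : T2Space W
  mul : W → W → W
  mul_assoc : ∀ p q r, mul (mul p q) r = mul p (mul q r)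
  cont_mul_left : ∀ p, Continuous fun q => mul p q
  cont_mul_right : ∀ p, Continuous fun q => mul q p
  star : W → W
  cont_star : Continuous star
  star_star : ∀ p, star (star p) = p
  star_mul : ∀ p q, star (mul p q) = mul (star q) (star p)
  ι : G → W
  cont_ι : Continuous ι
  ι_mul : ∀ g h : G, ι (g * h) = mul (ι g) (ι h)
  ι_inv : ∀ g : G, ι g⁻¹ = star (ι g)
  dense_ι : Dense (Set.range ι)
  wap_iff : ∀ f : G → ℂ, IsWAP f ↔ ∃ F : W → ℂ, Continuous F ∧ ∀ g, f g = F (ι g)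

attribute [instance] WAPCompactification.topW

namespace WAPCompactification

variable {G : Type*} [Group G] [TopologicalSpace G] (WC : WAPCompactification G)

/-- The left ideal `W(G)·p`. -/
def Wp (p : WC.W) : Set WC.W := Set.range fun s => WC.mul s p

/-- Green's preorder `p ≤_L q`, i.e. `W(G)p ⊆ W(G)q`. -/
def leL (p q : WC.W) : Prop := WC.Wp p ⊆ WC.Wp q

/-- Green's equivalence relation `p ≡_L q`. -/
def eqL (p q : WC.W) : Prop := WC.leL p q ∧ WC.leL q p

/-- A central idempotent of `W(G)`. -/
def CentralIdem (e : WC.W) : Prop :=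
  WC.mul e e = e ∧ ∀ w, WC.mul e w = WC.mul w e

end WAPCompactification

/-!
Since `e` is idempotent and `G` is dense in `W(G)`, one can choose `b : ℕ → G` with
`ι ((b m)⁻¹ * b n) = (ι (b m))* ι (b n)` as close to `e` as we like whenever `m < n`; applying
the involution, it is then close to `e*` whenever `n < m`. Separate continuity of the
multiplication forces both iterated limits of this double sequence along a free ultrafilter to
equal `x y`, where `x` and `y` are the limits of `(ι (b m))*` and `ι (b n)`. Hence every closed
neighbourhood of `e` meets every closed neighbourhood of `e*`, and `e = e*` because `W(G)` is
regular.
-/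

theorem IsClosed.apply_mem_of_tendsto_of_eventually_eventually {α β X Y Z : Type*}
    [TopologicalSpace X] [TopologicalSpace Y] [TopologicalSpace Z] {f : X → Y → Z}
    (hf : ∀ a, Continuous (f a)) (hf' : ∀ b, Continuous fun a => f a b)
    {l₁ : Filter α} {l₂ : Filter β} [l₁.NeBot] [l₂.NeBot] {u : α → X} {v : β → Y} {x : X} {y : Y}
    (hu : Tendsto u l₁ (𝓝 x)) (hv : Tendsto v l₂ (𝓝 y)) {C : Set Z} (hC : IsClosed C)
    (h : ∀ᶠ i in l₁, ∀ᶠ j in l₂, f (u i) (v j) ∈ C) : f x y ∈ C :=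
  hC.mem_of_tendsto (((hf' y).tendsto x).comp hu) <|
    h.mono fun i hi => hC.mem_of_tendsto (((hf (u i)).tendsto y).comp hv) hi

theorem exists_seq_inv_mul_mem {G : Type*} [Group G] {A : Set G}
    (hA : ∀ s : Finset G, ↑s ⊆ A → ∃ c ∈ A, ∀ x ∈ s, x * c ∈ A) :
    ∃ b : ℕ → G, ∀ m n, m < n → (b m)⁻¹ * b n ∈ A := by
  classical
  choose! next hnext_mem hnext using hA
  -- the state after `n` steps is `(b n, {(b m)⁻¹ * b n | m < n})`
  let step : G × Finset G → G × Finset G := fun p =>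
    (p.1 * next p.2, insert (next p.2) (p.2.image (· * next p.2)))
  let st : ℕ → G × Finset G := fun n => step^[n] (1, ∅)
  have hsucc (n : ℕ) : st (n + 1) = step (st n) := Function.iterate_succ_apply' step n _
  have hsub (n : ℕ) : ↑(st n).2 ⊆ A := by
    induction n with
    | zero => simp [st]
    | succ n ih =>
      intro z hz
      simp only [hsucc, step, Finset.coe_insert, Finset.coe_image, Set.mem_insert_iff,
        Set.mem_image, Finset.mem_coe] at hz
      rcases hz with rfl | ⟨x, hx, rfl⟩
      exacts [hnext_mem _ ih, hnext _ ih x hx]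
  have hmem (m n : ℕ) (hmn : m < n) : ((st m).1)⁻¹ * (st n).1 ∈ (st n).2 := by
    induction n with
    | zero => omega
    | succ n ih =>
      simp only [hsucc, step, Finset.mem_insert, Finset.mem_image]
      rcases (Nat.lt_succ_iff.1 hmn).lt_or_eq with hlt | rfl
      · exact Or.inr ⟨_, ih hlt, by group⟩
      · exact Or.inl (by group)
  exact ⟨fun n => (st n).1, fun m n hmn => hsub n (hmem m n hmn)⟩

namespace WAPCompactification

variable {G : Type*} [Group G] [TopologicalSpace G] (WC : WAPCompactification G)

theorem ι_inv_mul (g h : G) : WC.ι (g⁻¹ * h) = WC.mul (WC.star (WC.ι g)) (WC.ι h) := by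
  rw [WC.ι_mul, WC.ι_inv]

theorem star_ι_inv_mul (g h : G) : WC.star (WC.ι (g⁻¹ * h)) = WC.ι (h⁻¹ * g) := by
  rw [← WC.ι_inv, mul_inv_rev, inv_inv]

theorem exists_seq_ι_inv_mul_mem {e : WC.W} (he : WC.mul e e = e) {U : Set WC.W}
    (hU : IsOpen U) (heU : e ∈ U) : ∃ b : ℕ → G, ∀ m n, m < n → WC.ι ((b m)⁻¹ * b n) ∈ U := by
  classical
  set U' := U ∩ (fun q => WC.mul q e) ⁻¹' U
  have hU' : IsOpen U' := hU.inter (hU.preimage (WC.cont_mul_right e))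
  suffices ∃ b : ℕ → G, ∀ m n, m < n → WC.ι ((b m)⁻¹ * b n) ∈ U' from
    this.imp fun b hb m n hmn => (hb m n hmn).1
  refine exists_seq_inv_mul_mem (A := WC.ι ⁻¹' U') fun s hs => ?_
  set O := U' ∩ ⋂ x ∈ s, (fun q => WC.mul (WC.ι x) q) ⁻¹' U'
  have hO : IsOpen O :=
    hU'.inter (isOpen_biInter_finset fun x _ => hU'.preimage (WC.cont_mul_left _))
  have hmul_e {q : WC.W} (hq : WC.mul q e ∈ U) : WC.mul q e ∈ U' :=
    ⟨hq, by rwa [Set.mem_preimage, WC.mul_assoc, he]⟩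
  have heO : e ∈ O :=
    ⟨⟨heU, by rwa [Set.mem_preimage, he]⟩, Set.mem_iInter₂.2 fun x hx => hmul_e (hs hx).2⟩
  obtain ⟨_, ⟨c, rfl⟩, hcO⟩ := WC.dense_ι.exists_mem_open hO ⟨e, heO⟩
  refine ⟨c, hcO.1, fun x hx => ?_⟩
  rw [Set.mem_preimage, WC.ι_mul]
  exact Set.mem_iInter₂.1 hcO.2 x hx

theorem inter_nonempty_of_mul_self {e : WC.W} (he : WC.mul e e = e) {C C' : Set WC.W}
    (hC : C ∈ 𝓝 e) (hCc : IsClosed C) (hC' : C' ∈ 𝓝 (WC.star e)) (hC'c : IsClosed C') :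
    (C ∩ C').Nonempty := by
  have := WC.compact
  obtain ⟨b, hb⟩ := WC.exists_seq_ι_inv_mul_mem he
    (isOpen_interior.inter (isOpen_interior.preimage WC.cont_star))
    ⟨mem_interior_iff_mem_nhds.2 hC, mem_interior_iff_mem_nhds.2 hC'⟩
  let 𝒱 := hyperfilter ℕ
  have h_gt (m : ℕ) : ∀ᶠ n in (𝒱 : Filter ℕ), m < n :=
    hyperfilter_le_cofinite (Nat.cofinite_eq_atTop ▸ eventually_gt_atTop m)
  let u : ℕ → WC.W := fun m => WC.star (WC.ι (b m))
  let v : ℕ → WC.W := fun n => WC.ι (b n)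
  have hu : Tendsto u 𝒱 (𝓝 (𝒱.map u).lim) := Ultrafilter.le_nhds_lim _
  have hv : Tendsto v 𝒱 (𝓝 (𝒱.map v).lim) := Ultrafilter.le_nhds_lim _
  have hC_mem := hCc.apply_mem_of_tendsto_of_eventually_eventually WC.cont_mul_left
    WC.cont_mul_right hu hv <| Eventually.of_forall fun m => (h_gt m).mono fun n hmn => by
      rw [← WC.ι_inv_mul]
      exact interior_subset (hb m n hmn).1
  have hC'_mem := hC'c.apply_mem_of_tendsto_of_eventually_eventually
    (f := fun q p => WC.mul p q) WC.cont_mul_right WC.cont_mul_left hv hu <|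
    Eventually.of_forall fun n => (h_gt n).mono fun m hnm => by
      rw [← WC.ι_inv_mul, ← WC.star_ι_inv_mul]
      exact interior_subset (hb n m hnm).2
  exact ⟨_, hC_mem, hC'_mem⟩

end WAPCompactification

theorem idempotent_star_self_general {G : Type*} [Group G] [TopologicalSpace G]
    (WC : WAPCompactification G) (e : WC.W) (he : WC.mul e e = e) :
    WC.star e = e := by
  have := WC.t2
  have := WC.compact
  by_contra hne
  obtain ⟨C, ⟨hC, hCc⟩, C', ⟨hC', hC'c⟩, hdisj⟩ :=
    ((closed_nhds_basis e).disjoint_iff (closed_nhds_basis (WC.star e))).1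
      (disjoint_nhds_nhds.2 (Ne.symm hne))
  exact Set.not_disjoint_iff_nonempty_inter.2 (WC.inter_nonempty_of_mul_self he hC hCc hC' hC'c)
    hdisj

/-- **Lemma 3.4.**  Let `G` be a Roelcke precompact Polish group.  Every idempotent
`e ∈ W(G)` satisfies `e* = e`. -/
theorem idempotent_star_self {G : Type*} [Group G] [TopologicalSpace G] [IsTopologicalGroup G]
    [PolishSpace G] (hG : RoelckePrecompact G)
    (WC : WAPCompactification G) (e : WC.W) (he : WC.mul e e = e) :
    WC.star e = e :=
  idempotent_star_self_general WC e he
end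

section
/- Let G be a Roelcke precompact Polish group such that every bounded Roelcke uniformly continuous function on G is weakly almost periodic. Then every quotient G' of G is Roelcke precompact and every bounded Roelcke uniformly continuous function on G' is weakly almost periodic; in particular, weakly almost periodic functions on G' separate points from closed sets, so G' is a WAP quotient of G. -/
open Filter Topology Set Pointwise

open scoped Uniformity BoundedContinuousFunction

/-!
Let `f` be bounded and left and right uniformly continuous on `G'`. Then `f ∘ π` is WAP on `G`,
so its orbit lies in a weakly compact `S ⊆ C_b(G)`. As `π` has dense range, composition with `π`
is a linear isometry `T : C_b(G') → C_b(G)`; by Hahn–Banach the weak topology of `C_b(G')` is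
induced by `T`, and the range of `T` is closed and convex, hence weakly closed, so `T⁻¹ S` is
weakly compact. It contains the orbit of `f`: `y ↦ f (y * ·)` is norm continuous by right uniform
continuity, `S` is norm closed and `π` has dense range.

For the separation, a compatible pseudometric for the right uniformity of the first countable
group `G'` gives a group seminorm `ℓ` defining its topology, and `g ↦ max (1 - ρ g / ε) 0`, with
`ρ g = inf {ℓ a + ℓ b | g = a * x * b}`, is `1` at `x`, vanishes on `A` for small `ε`, and is
Lipschitz for `ℓ` on both sides, hence left and right uniformly continuous.
-/

section UniformContinuity

variable {G G' : Type*} [Group G] [TopologicalSpace G] [Group G'] [TopologicalSpace G']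

theorem LeftUC.of_le {f : G → ℂ} {ω : G → ℝ} (hω : Tendsto ω (𝓝 1) (𝓝 0))
    (hf : ∀ g h, ‖f g - f h‖ ≤ ω (g⁻¹ * h)) : LeftUC f := fun _ hε =>
  ⟨ω ⁻¹' Iio _, hω (Iio_mem_nhds hε), fun g h hgh => (hf g h).trans_lt hgh⟩

theorem RightUC.of_le {f : G → ℂ} {ω : G → ℝ} (hω : Tendsto ω (𝓝 1) (𝓝 0))
    (hf : ∀ g h, ‖f g - f h‖ ≤ ω (h * g⁻¹)) : RightUC f := fun _ hε =>
  ⟨ω ⁻¹' Iio _, hω (Iio_mem_nhds hε), fun g h hgh => (hf g h).trans_lt hgh⟩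

theorem LeftUC.comp_monoidHom {f : G' → ℂ} (hf : LeftUC f) {π : G →* G'}
    (hπ : ContinuousAt π 1) : LeftUC (f ∘ π) := fun ε hε => by
  obtain ⟨U, hU, hUf⟩ := hf ε hε
  exact ⟨π ⁻¹' U, hπ.preimage_mem_nhds (by rwa [map_one]),
    fun g h hgh => hUf _ _ (by simpa using hgh)⟩

theorem RightUC.comp_monoidHom {f : G' → ℂ} (hf : RightUC f) {π : G →* G'}
    (hπ : ContinuousAt π 1) : RightUC (f ∘ π) := fun ε hε => by
  obtain ⟨U, hU, hUf⟩ := hf ε hε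
  exact ⟨π ⁻¹' U, hπ.preimage_mem_nhds (by rwa [map_one]),
    fun g h hgh => hUf _ _ (by simpa using hgh)⟩

variable [IsTopologicalGroup G]

theorem eventually_mul_inv_mem {U : Set G} (hU : U ∈ 𝓝 1) (g : G) :
    ∀ᶠ h in 𝓝 g, h * g⁻¹ ∈ U :=
  (continuous_mul_const g⁻¹).continuousAt.preimage_mem_nhds (by rwa [mul_inv_cancel])

theorem RightUC.continuous {f : G → ℂ} (hf : RightUC f) : Continuous f := by
  refine continuous_iff_continuousAt.2 fun g => Metric.tendsto_nhds.2 fun ε hε => ?_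
  obtain ⟨U, hU, hUf⟩ := hf ε hε
  filter_upwards [eventually_mul_inv_mem hU g] with h hh
  rw [dist_comm, dist_eq_norm]
  exact hUf g h hh

theorem RightUC.continuous_compContinuous_mulLeft {F : G →ᵇ ℂ} (hF : RightUC F) :
    Continuous fun y => F.compContinuous (ContinuousMap.mulLeft y) := by
  refine continuous_iff_continuousAt.2 fun y => Metric.tendsto_nhds.2 fun ε hε => ?_
  obtain ⟨U, hU, hUF⟩ := hF (ε / 2) (half_pos hε)
  filter_upwards [eventually_mul_inv_mem hU y] with y' hy'
  refine ((BoundedContinuousFunction.dist_le (half_pos hε).le).2 fun z => ?_).trans_lt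
    (half_lt_self hε)
  rw [dist_comm, dist_eq_norm]
  refine (hUF (y * z) (y' * z) ?_).le
  simpa [mul_assoc] using hy'

end UniformContinuity

theorem RoelckePrecompact.of_denseRange {G G' : Type*} [Group G] [TopologicalSpace G] [Group G']
    [TopologicalSpace G'] [IsTopologicalGroup G'] (hG : RoelckePrecompact G) {π : G →* G'}
    (hπ : ContinuousAt π 1) (hdense : DenseRange π) : RoelckePrecompact G' := by
  intro U hU
  obtain ⟨V, hVo, hV1, hVU⟩ := exists_open_nhds_one_mul_subset hU
  obtain ⟨F, hF, hFG⟩ :=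
    hG (π ⁻¹' V) (hπ.preimage_mem_nhds (by rw [map_one]; exact hVo.mem_nhds hV1))
  refine ⟨π '' F, hF.image π, eq_univ_of_forall fun y => ?_⟩
  obtain ⟨g, w, hw, hgw⟩ : ∃ g, π g ∈ y • V⁻¹ :=
    hdense.exists_mem_open (hVo.inv.smul y) ⟨y, 1, by simpa using hV1, mul_one y⟩
  obtain ⟨_, ⟨u, hu, k, hk, rfl⟩, q, hq, rfl⟩ := hFG.symm ▸ mem_univ g
  have hy : y = π u * π k * (π q * w⁻¹) := by
    simp only [smul_eq_mul, map_mul] at hgw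
    rw [← mul_assoc, ← hgw]
    group
  rw [hy]
  exact mul_mem_mul (mul_mem_mul (hVU (subset_mul_left V hV1 hu)) (mem_image_of_mem π hk))
    (hVU (mul_mem_mul hq (mem_inv.1 hw)))

section Seminorm

variable {H : Type*} [Group H]

theorem min_one_add_le {x y : ℝ} (hx : 0 ≤ x) (hy : 0 ≤ y) :
    min 1 (x + y) ≤ min 1 x + min 1 y := by
  rcases le_total 1 x with h | h
  · simp [h, hy]
  rcases le_total 1 y with h' | h'
  · simp [h', hx]
  · simp [h, h']

theorem PseudoMetricSpace.bddAbove_range_min_one_dist (m : PseudoMetricSpace H) (a : H) :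
    BddAbove (range fun g => min 1 (m.dist (a * g) g)) :=
  ⟨1, by rintro _ ⟨g, rfl⟩; exact min_le_left _ _⟩

noncomputable def PseudoMetricSpace.displacementSeminorm (m : PseudoMetricSpace H) :
    GroupSeminorm H where
  toFun a := ⨆ g, min 1 (m.dist (a * g) g)
  map_one' := by simp
  mul_le' a b := by
    let := m
    refine ciSup_le fun g => ?_
    calc min 1 (dist (a * b * g) g)
        ≤ min 1 (dist (a * (b * g)) (b * g) + dist (b * g) g) := by
          rw [mul_assoc]; exact min_le_min_left _ (dist_triangle _ _ _)
      _ ≤ min 1 (dist (a * (b * g)) (b * g)) + min 1 (dist (b * g) g) :=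
          min_one_add_le dist_nonneg dist_nonneg
      _ ≤ _ := add_le_add (le_ciSup (m.bddAbove_range_min_one_dist a) _)
          (le_ciSup (m.bddAbove_range_min_one_dist b) _)
  inv' a := by
    let := m
    rw [← (Equiv.mulLeft a).iSup_comp]
    simp [dist_comm]

theorem exists_groupSeminorm_hasBasis_nhds_one [TopologicalSpace H] [IsTopologicalGroup H]
    [FirstCountableTopology H] :
    ∃ ℓ : GroupSeminorm H, (𝓝 (1 : H)).HasBasis (fun ε : ℝ => 0 < ε) fun ε => {a | ℓ a < ε} := by
  let := IsTopologicalGroup.rightUniformSpace H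
  have : (𝓤 H).IsCountablyGenerated := Filter.comap.isCountablyGenerated _ _
  obtain ⟨m, hm⟩ := UniformSpace.metrizable_uniformity H
  have hbasis : (comap (fun p : H × H => p.2 * p.1⁻¹) (𝓝 1)).HasBasis (fun ε : ℝ => 0 < ε)
      fun ε => {p | m.dist p.1 p.2 < ε} := by
    have := @Metric.uniformity_basis_dist H m
    rwa [hm] at this
  let := m
  refine ⟨m.displacementSeminorm, ⟨fun s => ⟨fun hs => ?_, fun ⟨ε, hε, hsub⟩ => ?_⟩⟩⟩
  · obtain ⟨ε, hε, hεs⟩ := hbasis.mem_iff.1 (preimage_mem_comap hs)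
    refine ⟨min ε 1, lt_min hε one_pos, fun a ha => ?_⟩
    have hdist : min 1 (dist (a * 1) 1) < min ε 1 :=
      (le_ciSup (m.bddAbove_range_min_one_dist a) 1).trans_lt ha
    have := (min_lt_iff.1 hdist).resolve_left (min_le_right _ _).not_gt
    simpa using @hεs (1, a) (by simpa [dist_comm] using this.trans_le (min_le_left _ _))
  -- Right translations preserve the entourages, so `a ∈ W` bounds `d (a * g) g` uniformly in `g`.
  · obtain ⟨W, hW, hWε⟩ := mem_comap.1 (hbasis.mem_of_mem (half_pos hε))
    refine mem_of_superset hW fun a ha => hsub ?_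
    refine (ciSup_le fun g => ?_).trans_lt (half_lt_self hε)
    refine (min_le_right _ _).trans (le_of_lt ?_)
    rw [dist_comm]
    exact @hWε (g, a * g) (by simpa using ha)

end Seminorm

namespace GroupSeminorm

variable {H : Type*} [Group H] (ℓ : GroupSeminorm H)

/-- The infimum of `ℓ a + ℓ b` over all factorisations `g = a * x * b`, indexed by `a`. -/
noncomputable def roelckeDist (x g : H) : ℝ := ⨅ a, ℓ a + ℓ (x⁻¹ * a⁻¹ * g)

theorem roelckeDist_le {x g a b : H} (h : a * x * b = g) : ℓ.roelckeDist x g ≤ ℓ a + ℓ b :=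
  ciInf_le ⟨0, by rintro _ ⟨c, rfl⟩; positivity⟩ a |>.trans_eq (by rw [← h]; group)

theorem le_roelckeDist {x g : H} {c : ℝ} (h : ∀ a b, a * x * b = g → c ≤ ℓ a + ℓ b) :
    c ≤ ℓ.roelckeDist x g :=
  le_ciInf fun a => h a _ (by group)

theorem roelckeDist_nonneg (x g : H) : 0 ≤ ℓ.roelckeDist x g :=
  ℓ.le_roelckeDist fun _ _ _ => by positivity

@[simp]
theorem roelckeDist_self (x : H) : ℓ.roelckeDist x x = 0 :=
  le_antisymm ((ℓ.roelckeDist_le (a := 1) (b := 1) (by group)).trans_eq (by simp))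
    (ℓ.roelckeDist_nonneg x x)

theorem roelckeDist_mul_right_le (x g k : H) :
    ℓ.roelckeDist x (g * k) ≤ ℓ.roelckeDist x g + ℓ k := by
  rw [← sub_le_iff_le_add]
  refine ℓ.le_roelckeDist fun a b h => ?_
  have : ℓ.roelckeDist x (g * k) ≤ ℓ a + ℓ (b * k) := ℓ.roelckeDist_le (by rw [← h]; group)
  linarith [map_mul_le_add ℓ b k]

theorem roelckeDist_mul_left_le (x g k : H) :
    ℓ.roelckeDist x (k * g) ≤ ℓ k + ℓ.roelckeDist x g := by
  rw [← sub_le_iff_le_add']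
  refine ℓ.le_roelckeDist fun a b h => ?_
  have : ℓ.roelckeDist x (k * g) ≤ ℓ (k * a) + ℓ b := ℓ.roelckeDist_le (by rw [← h]; group)
  linarith [map_mul_le_add ℓ k a]

theorem abs_roelckeDist_sub_le_inv_mul (x g h : H) :
    |ℓ.roelckeDist x g - ℓ.roelckeDist x h| ≤ ℓ (g⁻¹ * h) := by
  have h₁ := ℓ.roelckeDist_mul_right_le x g (g⁻¹ * h)
  have h₂ := ℓ.roelckeDist_mul_right_le x h (h⁻¹ * g)
  rw [mul_inv_cancel_left] at h₁
  rw [mul_inv_cancel_left, ← map_inv_eq_map ℓ, mul_inv_rev, inv_inv] at h₂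
  rw [abs_sub_le_iff]
  constructor <;> linarith

theorem abs_roelckeDist_sub_le_mul_inv (x g h : H) :
    |ℓ.roelckeDist x g - ℓ.roelckeDist x h| ≤ ℓ (h * g⁻¹) := by
  have h₁ := ℓ.roelckeDist_mul_left_le x g (h * g⁻¹)
  have h₂ := ℓ.roelckeDist_mul_left_le x h (g * h⁻¹)
  rw [inv_mul_cancel_right] at h₁
  rw [inv_mul_cancel_right, ← map_inv_eq_map ℓ, mul_inv_rev, inv_inv] at h₂
  rw [abs_sub_le_iff]
  constructor <;> linarith

theorem exists_mul_mul_eq_of_roelckeDist_lt {x g : H} {ε : ℝ} (h : ℓ.roelckeDist x g < ε) :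
    ∃ a b, ℓ a < ε ∧ ℓ b < ε ∧ a * x * b = g := by
  obtain ⟨a, ha⟩ := exists_lt_of_ciInf_lt h
  refine ⟨a, x⁻¹ * a⁻¹ * g, ?_, ?_, by group⟩ <;>
    linarith [apply_nonneg ℓ a, apply_nonneg ℓ (x⁻¹ * a⁻¹ * g)]

theorem tendsto_nhds_one [TopologicalSpace H] {ℓ : GroupSeminorm H}
    (hℓ : (𝓝 (1 : H)).HasBasis (fun ε : ℝ => 0 < ε) fun ε => {a | ℓ a < ε}) :
    Tendsto ℓ (𝓝 1) (𝓝 0) :=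
  tendsto_order.2 ⟨fun _ hc => .of_forall fun a => hc.trans_le (apply_nonneg ℓ a),
    fun _ hc => hℓ.mem_of_mem hc⟩

end GroupSeminorm

theorem exists_leftUC_rightUC_separating {H : Type*} [Group H] [TopologicalSpace H]
    [IsTopologicalGroup H] [FirstCountableTopology H] {A : Set H} {x : H} (hA : IsClosed A)
    (hx : x ∉ A) :
    ∃ f : H → ℂ, LeftUC f ∧ RightUC f ∧ (∃ C : ℝ, ∀ g, ‖f g‖ ≤ C) ∧ f x = 1 ∧
      ∀ a ∈ A, f a = 0 := by
  obtain ⟨ℓ, hℓ⟩ := exists_groupSeminorm_hasBasis_nhds_one (H := H)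
  have hmono : MonotoneOn (fun ε => {a | ℓ a < ε}) {ε | 0 < ε} :=
    fun _ _ _ _ hεδ _ ha => lt_of_lt_of_le ha hεδ
  have hcont : Tendsto (fun p : H × H => p.1 * x * p.2) (𝓝 1 ×ˢ 𝓝 1) (𝓝 x) := by
    rw [← nhds_prod_eq]
    simpa using (by fun_prop : Continuous fun p : H × H => p.1 * x * p.2).tendsto (1, 1)
  obtain ⟨ε, hε, hεA⟩ := (hℓ.prod_same_index_mono hℓ hmono hmono).mem_iff.1
    (hcont (hA.isOpen_compl.mem_nhds hx))
  set ρ := ℓ.roelckeDist x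
  have hρA : ∀ a ∈ A, ε ≤ ρ a := fun a ha => not_lt.1 fun hlt => by
    obtain ⟨b, c, hb, hc, rfl⟩ := ℓ.exists_mul_mul_eq_of_roelckeDist_lt hlt
    exact @hεA (b, c) ⟨hb, hc⟩ ha
  set φ : H → ℝ := fun g => max (1 - ρ g / ε) 0
  have hφ : ∀ g h, ‖(φ g : ℂ) - φ h‖ ≤ |ρ g - ρ h| / ε := fun g h => by
    rw [← Complex.ofReal_sub, Complex.norm_real, Real.norm_eq_abs]
    calc |φ g - φ h| ≤ |(1 - ρ g / ε) - (1 - ρ h / ε)| := abs_max_sub_max_le_abs _ _ _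
      _ = |ρ g - ρ h| / ε := by
        rw [show (1 - ρ g / ε) - (1 - ρ h / ε) = -((ρ g - ρ h) / ε) by ring, abs_neg, abs_div,
          abs_of_pos hε]
  have hω : Tendsto (fun a => ℓ a / ε) (𝓝 1) (𝓝 0) := by
    simpa using (GroupSeminorm.tendsto_nhds_one hℓ).div_const ε
  refine ⟨fun g => φ g, LeftUC.of_le hω fun g h => ?_, RightUC.of_le hω fun g h => ?_,
    ⟨1, fun g => ?_⟩, by simp [φ, ρ], fun a ha => ?_⟩
  · exact (hφ g h).trans (div_le_div_of_nonneg_right (ℓ.abs_roelckeDist_sub_le_inv_mul x g h) hε.le)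
  · exact (hφ g h).trans (div_le_div_of_nonneg_right (ℓ.abs_roelckeDist_sub_le_mul_inv x g h) hε.le)
  · rw [Complex.norm_real, Real.norm_of_nonneg (le_max_right _ _)]
    exact max_le (sub_le_self _ (div_nonneg (ℓ.roelckeDist_nonneg x g) hε.le)) zero_le_one
  · have : 1 ≤ ρ a / ε := (one_le_div hε).2 (hρA a ha)
    simp [φ, max_eq_right (sub_nonpos.2 this)]

section WeakTopology

variable {E E' : Type*} [NormedAddCommGroup E] [NormedSpace ℂ E]
  [NormedAddCommGroup E'] [NormedSpace ℂ E']

theorem LinearIsometry.exists_comp_eq {𝕜 : Type*} [RCLike 𝕜] {F F' : Type*}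
    [NormedAddCommGroup F] [NormedSpace 𝕜 F] [NormedAddCommGroup F'] [NormedSpace 𝕜 F']
    (T : F' →ₗᵢ[𝕜] F) (φ : StrongDual 𝕜 F') :
    ∃ ψ : StrongDual 𝕜 F, ψ ∘L T.toContinuousLinearMap = φ := by
  obtain ⟨ψ, hψ, -⟩ := exists_extension_norm_eq _
    (φ ∘L T.equivRange.symm.toLinearIsometry.toContinuousLinearMap)
  refine ⟨ψ, ContinuousLinearMap.ext fun x => ?_⟩
  simpa using hψ (T.equivRange x)

theorem weakTopology_eq_induced (T : E' →L[ℂ] E)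
    (hT : ∀ φ : StrongDual ℂ E', ∃ ψ : StrongDual ℂ E, ψ ∘L T = φ) :
    weakTopology E' = (weakTopology E).induced T := by
  simp only [weakTopology, induced_to_pi, induced_iInf, induced_compose]
  refine le_antisymm (le_iInf fun ψ => iInf_le_of_le (ψ ∘L T) le_rfl) (le_iInf fun φ => ?_)
  obtain ⟨ψ, rfl⟩ := hT φ
  exact iInf_le_of_le ψ le_rfl

theorem LinearIsometry.isClosed_weakSpace_range (T : E' →ₗᵢ[ℂ] E) [CompleteSpace E'] :
    IsClosed (X := WeakSpace ℂ E) (Set.range T) := by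
  have hconv : Convex ℝ (Set.range T) := by
    have := ((LinearMap.range T.toLinearMap).restrictScalars ℝ).convex
    rwa [Submodule.coe_restrictScalars, LinearMap.coe_range] at this
  have := hconv.toWeakSpace_closure ℂ
  rw [T.isometry.isClosedEmbedding.isClosed_range.closure_eq] at this
  have himage : toWeakSpace ℂ E '' Set.range T = Set.range T := Set.image_id _
  rw [himage] at this
  exact closure_eq_iff_isClosed.1 this.symm

theorem LinearIsometry.isInducing_weakSpace_map (T : E' →ₗᵢ[ℂ] E) :
    IsInducing (WeakSpace.map T.toContinuousLinearMap) :=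
  ⟨weakTopology_eq_induced T.toContinuousLinearMap T.exists_comp_eq⟩

theorem LinearIsometry.isCompact_weakSpace_preimage [CompleteSpace E'] (T : E' →ₗᵢ[ℂ] E)
    {S : Set E} (hS : IsCompact (X := WeakSpace ℂ E) S) :
    IsCompact (X := WeakSpace ℂ E') (T ⁻¹' S) := by
  rw [T.isInducing_weakSpace_map.isCompact_iff]
  exact (Set.image_preimage_eq_inter_range (f := T) ▸ hS.inter_right T.isClosed_weakSpace_range)

end WeakTopology

namespace BoundedContinuousFunction

variable {α γ β : Type*} [TopologicalSpace α] [TopologicalSpace γ] [SeminormedAddCommGroup β]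

theorem norm_compContinuous_of_denseRange (F : α →ᵇ β) {g : C(γ, α)}
    (hg : DenseRange g) : ‖F.compContinuous g‖ = ‖F‖ := by
  refine le_antisymm (F.norm_compContinuous_le g) ((F.norm_le (norm_nonneg _)).2 fun y => ?_)
  exact isClosed_property (p := fun y => ‖F y‖ ≤ ‖F.compContinuous g‖) hg
    (isClosed_le (by fun_prop) continuous_const) (F.compContinuous g).norm_coe_le_norm y

variable (β) (𝕜 : Type*) [NormedField 𝕜] [NormedSpace 𝕜 β]

noncomputable def compContinuousₗᵢ (g : C(γ, α)) (hg : DenseRange g) : (α →ᵇ β) →ₗᵢ[𝕜] γ →ᵇ β :=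
  ⟨(compContinuousCLM β 𝕜 g).toLinearMap, fun F => F.norm_compContinuous_of_denseRange hg⟩

end BoundedContinuousFunction

theorem EveryRUCIsWAP.of_denseRange {G G' : Type*} [Group G] [TopologicalSpace G] [Group G']
    [TopologicalSpace G'] [IsTopologicalGroup G'] (hRW : EveryRUCIsWAP G) {π : G →* G'}
    (hπ : Continuous π) (hdense : DenseRange π) : EveryRUCIsWAP G' := by
  rintro f hL hR ⟨C, hC⟩
  let F : G' →ᵇ ℂ := .ofNormedAddCommGroup f hR.continuous C hC
  let T := BoundedContinuousFunction.compContinuousₗᵢ ℂ ℂ ⟨π, hπ⟩ hdense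
  let orbit y := F.compContinuous (ContinuousMap.mulLeft y)
  obtain ⟨-, -, S, hS, hSf⟩ := hRW (f ∘ π) (hL.comp_monoidHom hπ.continuousAt)
    (hR.comp_monoidHom hπ.continuousAt) ⟨C, fun g => hC (π g)⟩
  replace hS : IsCompact (X := WeakSpace ℂ (G →ᵇ ℂ)) S := hS
  have hS_closed : IsClosed S := hS.isClosed.preimage (toWeakSpaceCLM ℂ _).continuous
  have horbit : ∀ y, T (orbit y) ∈ S := by
    refine isClosed_property hdense (hS_closed.preimage
      (T.continuous.comp (RightUC.continuous_compContinuous_mulLeft hR))) fun g => ?_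
    obtain ⟨F₀, hF₀, hF₀g⟩ := hSf g
    convert hF₀
    ext x
    rw [hF₀g, Function.comp_apply, map_mul]
    rfl
  exact ⟨hL, hR, T ⁻¹' S, T.isCompact_weakSpace_preimage hS,
    fun y => ⟨orbit y, horbit y, fun _ => rfl⟩⟩

theorem quotient_ruc_eq_wap_general {G : Type*} [Group G] [TopologicalSpace G]
    (hG : RoelckePrecompact G) (hRW : EveryRUCIsWAP G)
    (G' : Type*) [Group G'] [TopologicalSpace G'] [IsTopologicalGroup G'] [PolishSpace G']
    (π : G →* G') (hπ : Continuous π) (hdense : DenseRange π) :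
    RoelckePrecompact G' ∧ EveryRUCIsWAP G' ∧
      ∀ (A : Set G') (x : G'), IsClosed A → x ∉ A →
        ∃ f : G' → ℂ, IsWAP f ∧ f x ∉ closure (f '' A) := by
  have hRW' := hRW.of_denseRange hπ hdense
  refine ⟨hG.of_denseRange hπ.continuousAt hdense, hRW', fun A x hA hx => ?_⟩
  obtain ⟨f, hL, hR, hbdd, hfx, hfA⟩ := exists_leftUC_rightUC_separating hA hx
  have hfA_closure : closure (f '' A) ⊆ {0} :=
    closure_minimal (image_subset_iff.2 hfA) isClosed_singleton
  exact ⟨f, hRW' f hL hR hbdd, fun h => one_ne_zero (hfx ▸ hfA_closure h)⟩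

/-- **Lemma 4.5.**  Let `G` be a Roelcke precompact Polish group such that every bounded
Roelcke uniformly continuous function on `G` is weakly almost periodic.  Then every quotient
`G'` of `G` (a Polish group with a continuous homomorphism `π : G → G'` with dense image) is
Roelcke precompact and every bounded Roelcke uniformly continuous function on `G'` is weakly
almost periodic; in particular weakly almost periodic functions on `G'` separate points from
closed sets, i.e. `G'` is a WAP quotient of `G`. -/
theorem quotient_ruc_eq_wap {G : Type*} [Group G] [TopologicalSpace G] [IsTopologicalGroup G]
    [PolishSpace G] (hG : RoelckePrecompact G) (hRW : EveryRUCIsWAP G)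
    (G' : Type*) [Group G'] [TopologicalSpace G'] [IsTopologicalGroup G'] [PolishSpace G']
    (π : G →* G') (hπ : Continuous π) (hdense : DenseRange π) :
    RoelckePrecompact G' ∧ EveryRUCIsWAP G' ∧
      ∀ (A : Set G') (x : G'), IsClosed A → x ∉ A →
        ∃ f : G' → ℂ, IsWAP f ∧ f x ∉ closure (f '' A) :=
  quotient_ruc_eq_wap_general hG hRW G' π hπ hdense
end
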